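/- Let X be a subshift over a finite alphabet Λ. Then the following are equivalent: (i) for every x ∈ X, the orbit of ξ_x under the spectral partial action is dense in Ω_X; (ii) X is collectively cofinal. -/

import Mathlib

open scoped Classical

namespace SubshiftPaper

variable {Λ : Type}

/-- The left shift on infinite words. -/
def shiftMap (x : ℕ → Λ) : ℕ → Λ := fun n => x (n + 1)

/-- Concatenation of a finite word with an infinite word. -/
def cat (α : List Λ) (y : ℕ → Λ) : ℕ → Λ := fun n => α.getD n (y (n - α.length))

/-- `α` is a prefix of the infinite word `x`. -/
def Pref (α : List Λ) (x : ℕ → Λ) : Prop := ∀ (i : ℕ) (h : i < α.length), x i = α[i]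

/-- The tail of `x` after `n` letters. -/
def tail (x : ℕ → Λ) (n : ℕ) : ℕ → Λ := fun i => x (n + i)

/-- `α` occurs in `x` at position `n`. -/
def OccursAt (α : List Λ) (x : ℕ → Λ) (n : ℕ) : Prop :=
  ∀ (i : ℕ) (h : i < α.length), x (n + i) = α[i]

/-- `α` occurs in `x` (as a contiguous block of letters). -/
def Occurs (α : List Λ) (x : ℕ → Λ) : Prop := ∃ n, OccursAt α x n

/-- `X` is a subshift: a nonempty closed shift-invariant subset. -/
def IsSubshift [TopologicalSpace Λ] (X : Set (ℕ → Λ)) : Prop :=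
  X.Nonempty ∧ IsClosed X ∧ ∀ x ∈ X, shiftMap x ∈ X

/-- The set of infinite words avoiding all words in `F`. -/
def ForbidSpace (F : Set (List Λ)) : Set (ℕ → Λ) := {x | ∀ α ∈ F, ¬ Occurs α x}

/-- `X` is a subshift of finite type. -/
def IsSFT (X : Set (ℕ → Λ)) : Prop := ∃ F : Set (List Λ), F.Finite ∧ X = ForbidSpace F

/-- The follower set of a finite word. -/
def follower (X : Set (ℕ → Λ)) (α : List Λ) : Set (ℕ → Λ) := {y | y ∈ X ∧ cat α y ∈ X}

/-- The cylinder of a finite word. -/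
def cylinder (X : Set (ℕ → Λ)) (α : List Λ) : Set (ℕ → Λ) := {x | x ∈ X ∧ Pref α x}

/-- The language of `X`. -/
def Language (X : Set (ℕ → Λ)) : Set (List Λ) := {α | ∃ x ∈ X, Occurs α x}

/-- The embedding of finite words into the free group. -/
def wd (α : List Λ) : FreeGroup Λ := (α.map FreeGroup.of).prod

/-- Indicator function of a set of group elements. -/
noncomputable def chi (s : Set (FreeGroup Λ)) : FreeGroup Λ → Bool :=
  fun g => if g ∈ s then true else false

/-- The set `ξ_x ⊆ 𝔽`. -/
def xiSet [DecidableEq Λ] (X : Set (ℕ → Λ)) (x : ℕ → Λ) : Set (FreeGroup Λ) :=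
  {g | ∃ α β : List Λ, g = wd α * (wd β)⁻¹ ∧
        FreeGroup.norm g = α.length + β.length ∧
        Pref α x ∧ tail x α.length ∈ follower X α ∩ follower X β}

/-- `ξ_x` as an element of `2^𝔽`. -/
noncomputable def xiB [DecidableEq Λ] (X : Set (ℕ → Λ)) (x : ℕ → Λ) : FreeGroup Λ → Bool :=
  chi (xiSet X x)

/-- The spectrum `Ω_X`: the closure of `{ξ_x : x ∈ X}` in `2^𝔽`. -/
noncomputable def Omega [DecidableEq Λ] (X : Set (ℕ → Λ)) : Set (FreeGroup Λ → Bool) :=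
  closure ((fun x => xiB X x) '' X)

/-- Left translation of an element of `2^𝔽`. -/
def translate (g : FreeGroup Λ) (ξ : FreeGroup Λ → Bool) : FreeGroup Λ → Bool :=
  fun h => ξ (g⁻¹ * h)

/-- `x` is the stem of `ξ`: `ξ ∩ 𝔽₊` is exactly the set of prefixes of `x`. -/
def IsStem (ξ : FreeGroup Λ → Bool) (x : ℕ → Λ) : Prop :=
  {g | ξ g = true} ∩ {g | ∃ α : List Λ, g = wd α} =
    {g | ∃ α : List Λ, g = wd α ∧ Pref α x}

/-- `x` is the stem of `ξ` at `g`: `ξ ∩ g𝔽₊ = {gα : α is a prefix of x}`. -/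
def IsStemAt (ξ : FreeGroup Λ → Bool) (g : FreeGroup Λ) (x : ℕ → Λ) : Prop :=
  {h | ξ h = true} ∩ {h | ∃ α : List Λ, h = g * wd α} =
    {h | ∃ α : List Λ, h = g * wd α ∧ Pref α x}

/-- The orbit of `ξ` under the spectral partial action. -/
def Orbit (ξ : FreeGroup Λ → Bool) : Set (FreeGroup Λ → Bool) :=
  {η | ∃ g : FreeGroup Λ, ξ g⁻¹ = true ∧ η = translate g ξ}

/-- Topological freeness of the spectral partial action. -/
noncomputable def TopFree [DecidableEq Λ] (X : Set (ℕ → Λ)) : Prop :=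
  ∀ g : FreeGroup Λ, g ≠ 1 →
    ∀ U : Set (FreeGroup Λ → Bool), IsOpen U →
      (U ∩ Omega X ⊆ {ξ | ξ g⁻¹ = true ∧ translate g ξ = ξ}) → U ∩ Omega X = ∅

/-- The periodic infinite word `γ^∞`. -/
noncomputable def perInf [Nonempty Λ] (γ : List Λ) : ℕ → Λ :=
  fun n => γ.getD (n % γ.length) (Classical.arbitrary Λ)

/-- `n`-fold concatenation of a finite word with itself. -/
def rep : ℕ → List Λ → List Λ
  | 0, _ => []
  | n + 1, γ => γ ++ rep n γ

/-- `γ` is a circuit relative to `X`. -/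
noncomputable def IsCircuit [Nonempty Λ] (X : Set (ℕ → Λ)) (γ : List Λ) : Prop :=
  γ ≠ [] ∧ perInf γ ∈ X

/-- `y` is an exit for the circuit `γ`. -/
noncomputable def IsExit [Nonempty Λ] (X : Set (ℕ → Λ)) (γ : List Λ) (y : ℕ → Λ) : Prop :=
  y ≠ perInf γ ∧ cat γ y ∈ X

/-- `z` is a strong exit for the circuit `γ`. -/
noncomputable def IsStrongExit [Nonempty Λ] (X : Set (ℕ → Λ)) (γ : List Λ) (z : ℕ → Λ) : Prop :=
  z ≠ perInf γ ∧ ∀ n : ℕ, cat (rep n γ) z ∈ X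

/-- The sets `X_g` of the standard partial action. -/
def Xg [DecidableEq Λ] (X : Set (ℕ → Λ)) (g : FreeGroup Λ) : Set (ℕ → Λ) :=
  {x | ∃ α β : List Λ, g = wd α * (wd β)⁻¹ ∧
        FreeGroup.norm g = α.length + β.length ∧
        ∃ y ∈ follower X α ∩ follower X β, x = cat α y}

/-- `x` is a fixed point for `θ_g`. -/
def IsThetaFixed [DecidableEq Λ] (X : Set (ℕ → Λ)) (g : FreeGroup Λ) (x : ℕ → Λ) : Prop :=
  ∃ α β : List Λ, g = wd α * (wd β)⁻¹ ∧
    FreeGroup.norm g = α.length + β.length ∧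
    ∃ y ∈ follower X α ∩ follower X β, x = cat β y ∧ cat α y = x

/-- `x` may be collectively reached from the finite set `B`. -/
def CollReached (X : Set (ℕ → Λ)) (B : Finset (List Λ)) (x : ℕ → Λ) : Prop :=
  ∃ α γ : List Λ, Pref α x ∧ ∀ β ∈ B, cat (β ++ γ) (tail x α.length) ∈ X

/-- `X` is collectively cofinal. -/
def CollCofinal (X : Set (ℕ → Λ)) : Prop :=
  ∀ B : Finset (List Λ), ↑B ⊆ Language X → (⋂ β ∈ B, follower X β).Nonempty →
    ∀ x ∈ X, CollReached X B x

/-- `X` is strongly cofinal. -/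
def StrongCofinal (X : Set (ℕ → Λ)) : Prop :=
  ∀ β ∈ Language X, ∃ M : ℕ, ∀ x ∈ X, ∃ α γ : List Λ, Pref α x ∧
    cat (β ++ γ) (tail x α.length) ∈ X ∧ α.length + γ.length ≤ M

/-- The even shift. -/
def evenShift : Set (ℕ → Fin 2) :=
  ForbidSpace {w | ∃ n : ℕ, w = 0 :: (List.replicate (2 * n + 1) 1 ++ [0])}

/-!
Both directions rest on the translation formula `(δα⁻¹) ξ_{αz} = ξ_{δz}`, a consequence of the
uniqueness of reduced forms `αβ⁻¹` in the free group. If the orbit of `ξ_x` is dense, it meets the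
neighbourhood `{η | β⁻¹ ∈ η for all β ∈ B}` of `ξ_z`, `z ∈ F_B`, at some `gξ_x` with
`g⁻¹ = αδ⁻¹ ∈ ξ_x`; then `g⁻¹β⁻¹ = α(βδ)⁻¹ ∈ ξ_x` says that `x = αw` with `βδw ∈ X`.
Conversely, to approximate `ξ_y` on the ball of radius `N`, apply collective cofinality to the
finite set of words of length `≤ N + m` followed by `tail y m`: this gives `x = αz` and `γ` such
that `ξ_{y'}`, `y' = y[0,m) γ z`, lies in the orbit of `ξ_x`. By construction the tails of `y'` at
depths `≤ N` have all the followers of those of `y`, and, `X` being closed, no others once `m` is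
large; so `ξ_y` and `ξ_{y'}` agree on the ball.
-/

section Words

@[simp] lemma cat_nil (y : ℕ → Λ) : cat [] y = y := by
  funext n
  simp [cat]

lemma cat_of_lt {u : List Λ} {y : ℕ → Λ} {n : ℕ} (h : n < u.length) : cat u y n = u[n] :=
  List.getD_eq_getElem u _ h

lemma cat_of_le {u : List Λ} {y : ℕ → Λ} {n : ℕ} (h : u.length ≤ n) :
    cat u y n = y (n - u.length) :=
  List.getD_eq_default u _ h

lemma cat_append (u v : List Λ) (y : ℕ → Λ) : cat (u ++ v) y = cat u (cat v y) := by
  funext n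
  rcases lt_or_ge n u.length with hu | hu
  · rw [cat_of_lt (by simp; omega), cat_of_lt hu, List.getElem_append_left hu]
  · rcases lt_or_ge n (u.length + v.length) with huv | huv
    · rw [cat_of_lt (by simp; omega), cat_of_le hu, cat_of_lt (by omega),
        List.getElem_append_right hu]
    · rw [cat_of_le (by simp; omega), cat_of_le hu, cat_of_le (by omega)]
      congr 1
      simp only [List.length_append]
      omega

@[simp] lemma tail_zero (x : ℕ → Λ) : tail x 0 = x := by
  funext i
  simp [tail]

lemma tail_tail (x : ℕ → Λ) (m k : ℕ) : tail (tail x m) k = tail x (m + k) := by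
  funext i
  simp only [tail, Nat.add_assoc]

lemma tail_cat_of_le {u : List Λ} {y : ℕ → Λ} {k : ℕ} (h : k ≤ u.length) :
    tail (cat u y) k = cat (u.drop k) y := by
  funext i
  rcases lt_or_ge (k + i) u.length with hu | hu
  · rw [tail, cat_of_lt hu, cat_of_lt (by simp; omega), List.getElem_drop]
  · rw [tail, cat_of_le hu, cat_of_le (by simp; omega)]
    congr 1
    simp only [List.length_drop]
    omega

@[simp] lemma tail_cat (u : List Λ) (y : ℕ → Λ) : tail (cat u y) u.length = y := by
  rw [tail_cat_of_le le_rfl, List.drop_length, cat_nil]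

lemma pref_nil (x : ℕ → Λ) : Pref [] x := fun _ h => absurd h (Nat.not_lt_zero _)

lemma pref_cat (u : List Λ) (y : ℕ → Λ) : Pref u (cat u y) := fun _ h => cat_of_lt h

lemma cat_tail_of_pref {u : List Λ} {x : ℕ → Λ} (h : Pref u x) : cat u (tail x u.length) = x := by
  funext n
  rcases lt_or_ge n u.length with hu | hu
  · rw [cat_of_lt hu, h n hu]
  · rw [cat_of_le hu, tail, Nat.add_sub_cancel' hu]

lemma pref_cat_append {u v : List Λ} {y : ℕ → Λ} (h : Pref v y) : Pref (u ++ v) (cat u y) := by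
  rw [← cat_tail_of_pref h, ← cat_append]
  exact pref_cat _ _

lemma Pref.of_append {u v : List Λ} {x : ℕ → Λ} (h : Pref (u ++ v) x) : Pref u x := fun i hi => by
  rw [h i (by simp; omega), List.getElem_append_left hi]

lemma Pref.tail_of_append {u v : List Λ} {x : ℕ → Λ} (h : Pref (u ++ v) x) :
    Pref v (tail x u.length) := fun i hi => by
  rw [tail, h _ (by simp; omega), List.getElem_append_right (by omega)]
  simp

lemma tail_eq_cat_of_pref {u v : List Λ} {x : ℕ → Λ} (h : Pref (u ++ v) x) :
    tail x u.length = cat v (tail x (u ++ v).length) := by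
  rw [List.length_append, ← tail_tail, cat_tail_of_pref h.tail_of_append]

lemma Pref.exists_append_of_cat {u v : List Λ} {y : ℕ → Λ} (h : Pref v (cat u y)) :
    (∃ w, u = v ++ w) ∨ ∃ w, v = u ++ w ∧ Pref w y := by
  rcases le_total v.length u.length with hvu | huv
  · refine Or.inl ⟨u.drop v.length, List.ext_getElem (by simp; omega) fun i hi _ => ?_⟩
    rcases lt_or_ge i v.length with hiv | hiv
    · rw [List.getElem_append_left hiv, ← h i hiv, cat_of_lt hi]
    · rw [List.getElem_append_right hiv, List.getElem_drop]
      congr 1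
      omega
  · have hv : v = u ++ v.drop u.length := by
      refine List.ext_getElem (by simp; omega) fun i hi _ => ?_
      rcases lt_or_ge i u.length with hiu | hiu
      · rw [List.getElem_append_left hiu, ← cat_of_lt (y := y) hiu, h i hi]
      · rw [List.getElem_append_right hiu, List.getElem_drop]
        congr 1
        omega
    refine Or.inr ⟨v.drop u.length, hv, ?_⟩
    have := (hv ▸ h).tail_of_append
    rwa [tail_cat] at this

def prefixWord (x : ℕ → Λ) (n : ℕ) : List Λ := List.ofFn fun i : Fin n => x i

@[simp] lemma length_prefixWord (x : ℕ → Λ) (n : ℕ) : (prefixWord x n).length = n :=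
  List.length_ofFn

lemma pref_prefixWord_iff {x y : ℕ → Λ} {n : ℕ} :
    Pref (prefixWord y n) x ↔ x ∈ PiNat.cylinder y n := by
  simp [Pref, prefixWord]

lemma cat_prefixWord_tail (x : ℕ → Λ) (n : ℕ) : cat (prefixWord x n) (tail x n) = x := by
  simpa using cat_tail_of_pref (pref_prefixWord_iff.2 (PiNat.self_mem_cylinder x n))

lemma tail_eq_cat_drop_prefixWord (x : ℕ → Λ) {k m : ℕ} (h : k ≤ m) :
    tail x k = cat ((prefixWord x m).drop k) (tail x m) := by
  conv_lhs => rw [← cat_prefixWord_tail x m]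
  rw [tail_cat_of_le (by simpa using h)]

lemma tail_cat_prefixWord_append (y z : ℕ → Λ) (γ : List Λ) {k m : ℕ} (h : k ≤ m) :
    tail (cat (prefixWord y m ++ γ) z) k = cat ((prefixWord y m).drop k ++ γ) z := by
  rw [tail_cat_of_le (by simp; omega), List.drop_append_of_le_length (by simpa using h)]

lemma mem_language_of_cat_mem {X : Set (ℕ → Λ)} {β : List Λ} {w : ℕ → Λ} (h : cat β w ∈ X) :
    β ∈ Language X :=
  ⟨cat β w, h, 0, fun i hi => by rw [Nat.zero_add, cat_of_lt hi]⟩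

variable [TopologicalSpace Λ]

lemma continuous_cat (u : List Λ) : Continuous (cat u : (ℕ → Λ) → ℕ → Λ) := by
  refine continuous_pi fun n => ?_
  rcases lt_or_ge n u.length with h | h
  · simp only [cat_of_lt h]
    exact continuous_const
  · simp only [cat_of_le h]
    exact continuous_apply _

lemma continuous_tail (k : ℕ) : Continuous fun x : ℕ → Λ => tail x k :=
  continuous_pi fun _ => continuous_apply _

lemma IsSubshift.tail_mem {X : Set (ℕ → Λ)} (hX : IsSubshift X) {x : ℕ → Λ} (hx : x ∈ X)
    (n : ℕ) : tail x n ∈ X := by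
  induction n with
  | zero => rwa [tail_zero]
  | succ n ih =>
    have : tail x (n + 1) = shiftMap (tail x n) := by
      funext i
      simp only [tail, shiftMap]
      congr 1
      omega
    exact this ▸ hX.2.2 _ ih

lemma exists_cylinder_cat_tail_mem [Finite Λ] [DiscreteTopology Λ] {X : Set (ℕ → Λ)}
    (hX : IsClosed X) (y : ℕ → Λ) (N : ℕ) :
    ∃ m ≥ N, ∀ w ∈ PiNat.cylinder y m, ∀ k ≤ N, ∀ β : List Λ, β.length ≤ N →
      cat β (tail w k) ∈ X → cat β (tail y k) ∈ X := by
  have hev : ∀ᶠ w in nhds y, ∀ k ∈ Set.Iic N, ∀ β ∈ {β : List Λ | β.length ≤ N},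
      cat β (tail w k) ∈ X → cat β (tail y k) ∈ X := by
    refine (Set.finite_Iic N).eventually_all.2 fun k _ =>
      (List.finite_length_le Λ N).eventually_all.2 fun β _ => ?_
    by_cases h : cat β (tail y k) ∈ X
    · exact Filter.Eventually.of_forall fun _ _ => h
    · have hcont := ((continuous_cat β).comp (continuous_tail k)).continuousAt (x := y)
      exact Filter.mem_of_superset (hcont.preimage_mem_nhds (hX.isOpen_compl.mem_nhds h))
        fun _ hw hw' => absurd hw' hw
  obtain ⟨_, ⟨x, n, rfl⟩, hy, hsub⟩ := (PiNat.isTopologicalBasis_cylinders _).mem_nhds_iff.1 hev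
  rw [PiNat.mem_cylinder_iff_eq] at hy
  exact ⟨max n N, le_max_right _ _, fun w hw k hk β hβ =>
    hsub (hy ▸ PiNat.cylinder_anti y (le_max_left _ _) hw) k hk β hβ⟩

end Words

section FreeGroupWords

def LastLettersDiffer (A B : List Λ) : Prop := ∀ a ∈ A.getLast?, ∀ b ∈ B.getLast?, a ≠ b

/-- Every `wd A * (wd B)⁻¹` is brought to reduced form by cancelling a common suffix. -/
lemma exists_common_suffix (A B : List Λ) :
    ∃ A₀ B₀ τ : List Λ, A = A₀ ++ τ ∧ B = B₀ ++ τ ∧ LastLettersDiffer A₀ B₀ := by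
  induction A using List.reverseRecOn generalizing B with
  | nil => exact ⟨[], B, [], rfl, by simp, by simp [LastLettersDiffer]⟩
  | append_singleton A a ih =>
    rcases B.eq_nil_or_concat with rfl | ⟨B, b, rfl⟩
    · exact ⟨A ++ [a], [], [], by simp, rfl, by simp [LastLettersDiffer]⟩
    by_cases hab : a = b
    · obtain ⟨A₀, B₀, τ, rfl, rfl, h⟩ := ih B
      exact ⟨A₀, B₀, τ ++ [a], by simp, by simp [hab], h⟩
    · exact ⟨A ++ [a], B ++ [b], [], by simp, by simp, by simpa [LastLettersDiffer]⟩

lemma wd_nil : wd ([] : List Λ) = 1 := rfl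

lemma wd_append (u v : List Λ) : wd (u ++ v) = wd u * wd v := by
  simp [wd]

lemma wd_append_mul_inv_wd_append (A B τ : List Λ) :
    wd (A ++ τ) * (wd (B ++ τ))⁻¹ = wd A * (wd B)⁻¹ := by
  simp only [wd_append, mul_inv_rev]
  group

def posNegWord (A B : List Λ) : List (Λ × Bool) :=
  A.map (·, true) ++ (B.map (·, false)).reverse

lemma wd_eq_mk (A : List Λ) : wd A = FreeGroup.mk (A.map (·, true)) := by
  induction A with
  | nil => rfl
  | cons a A ih =>
    rw [← List.singleton_append, wd_append, ih, List.map_append, ← FreeGroup.mul_mk]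
    rfl

lemma wd_mul_inv_wd (A B : List Λ) : wd A * (wd B)⁻¹ = FreeGroup.mk (posNegWord A B) := by
  rw [wd_eq_mk, wd_eq_mk, FreeGroup.inv_mk, FreeGroup.mul_mk]
  simp [FreeGroup.invRev, posNegWord, Function.comp_def]

lemma isReduced_posNegWord {A B : List Λ} (h : LastLettersDiffer A B) :
    FreeGroup.IsReduced (posNegWord A B) := by
  have hconst : ∀ (b : Bool) (L : List Λ), FreeGroup.IsReduced (L.map (·, b)) := fun b L =>
    (List.isChain_map _).2 (List.pairwise_of_forall fun _ _ _ => rfl).isChain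
  rw [posNegWord, ← List.map_reverse]
  refine List.isChain_append.2 ⟨hconst _ _, hconst _ _, ?_⟩
  simp only [List.getLast?_map, List.head?_map, List.head?_reverse, Option.mem_def,
    Option.map_eq_some_iff]
  rintro _ ⟨a, ha, rfl⟩ _ ⟨b, hb, rfl⟩ rfl
  exact absurd rfl (h a ha a hb)

lemma posNegWord_injective {A B A' B' : List Λ} (h : posNegWord A B = posNegWord A' B') :
    A = A' ∧ B = B' := by
  have hA : ∀ A B : List Λ, ((posNegWord A B).filter (·.2)).map Prod.fst = A := by
    intro A B
    simp [posNegWord, List.filter_append, List.filter_map, Function.comp_def]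
  have hB : ∀ A B : List Λ, ((posNegWord A B).filter (!·.2)).reverse.map Prod.fst = B := by
    intro A B
    simp [posNegWord, List.filter_append, List.filter_map, Function.comp_def]
  exact ⟨(hA A B).symm.trans (h ▸ hA A' B'), (hB A B).symm.trans (h ▸ hB A' B')⟩

variable [DecidableEq Λ]

lemma toWord_wd_mul_inv_wd {A B : List Λ} (h : LastLettersDiffer A B) :
    (wd A * (wd B)⁻¹).toWord = posNegWord A B := by
  rw [wd_mul_inv_wd, FreeGroup.toWord_mk, (isReduced_posNegWord h).reduce_eq]

lemma norm_wd_mul_inv_wd_eq_iff {A B : List Λ} :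
    FreeGroup.norm (wd A * (wd B)⁻¹) = A.length + B.length ↔ LastLettersDiffer A B := by
  refine ⟨fun hn => ?_, fun h => by simp [FreeGroup.norm, toWord_wd_mul_inv_wd h, posNegWord]⟩
  obtain ⟨A₀, B₀, τ, rfl, rfl, h₀⟩ := exists_common_suffix A B
  rw [wd_append_mul_inv_wd_append, FreeGroup.norm, toWord_wd_mul_inv_wd h₀] at hn
  obtain rfl : τ = [] := List.eq_nil_of_length_eq_zero (by simp [posNegWord] at hn; omega)
  simpa using h₀

lemma eq_append_of_wd_mul_inv_wd_eq {A B A₀ B₀ : List Λ} (h₀ : LastLettersDiffer A₀ B₀)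
    (h : wd A * (wd B)⁻¹ = wd A₀ * (wd B₀)⁻¹) : ∃ τ, A = A₀ ++ τ ∧ B = B₀ ++ τ := by
  obtain ⟨A₁, B₁, τ, rfl, rfl, h₁⟩ := exists_common_suffix A B
  rw [wd_append_mul_inv_wd_append] at h
  have hw : posNegWord A₁ B₁ = posNegWord A₀ B₀ := by
    rw [← toWord_wd_mul_inv_wd h₁, ← toWord_wd_mul_inv_wd h₀, h]
  obtain ⟨rfl, rfl⟩ := posNegWord_injective hw
  exact ⟨τ, rfl, rfl⟩

end FreeGroupWords

section Spectrum

variable [DecidableEq Λ] {X : Set (ℕ → Λ)}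

lemma xiB_eq_true {x : ℕ → Λ} {g : FreeGroup Λ} : xiB X x g = true ↔ g ∈ xiSet X x := by
  simp [xiB, chi]

lemma xiB_eq_xiB_iff {x y : ℕ → Λ} {g h : FreeGroup Λ} :
    xiB X x g = xiB X y h ↔ (g ∈ xiSet X x ↔ h ∈ xiSet X y) := by
  simp [xiB, chi]

lemma exists_norm_le_forall_mem {U : Set (FreeGroup Λ → Bool)} (hU : IsOpen U)
    {ξ : FreeGroup Λ → Bool} (hξ : ξ ∈ U) :
    ∃ N, ∀ η, (∀ g, FreeGroup.norm g ≤ N → η g = ξ g) → η ∈ U := by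
  obtain ⟨I, u, hu, hsub⟩ := isOpen_pi_iff.1 hU ξ hξ
  refine ⟨I.sup FreeGroup.norm, fun η hη => hsub fun g hg => ?_⟩
  rw [hη g (Finset.le_sup hg)]
  exact (hu g hg).2

variable [TopologicalSpace Λ]

lemma mem_xiSet_iff (hX : IsSubshift X) {x : ℕ → Λ} (hx : x ∈ X) {g : FreeGroup Λ} :
    g ∈ xiSet X x ↔ ∃ α β : List Λ, g = wd α * (wd β)⁻¹ ∧
      FreeGroup.norm g = α.length + β.length ∧ Pref α x ∧ cat β (tail x α.length) ∈ X := by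
  constructor
  · rintro ⟨α, β, rfl, hn, hα, -, -, hβ⟩
    exact ⟨α, β, rfl, hn, hα, hβ⟩
  · rintro ⟨α, β, rfl, hn, hα, hβ⟩
    have hxα := hX.tail_mem hx α.length
    exact ⟨α, β, rfl, hn, hα, ⟨hxα, by rwa [cat_tail_of_pref hα]⟩, hxα, hβ⟩

lemma mul_inv_mem_xiSet_iff (hX : IsSubshift X) {x : ℕ → Λ} (hx : x ∈ X) {A B : List Λ}
    (hA : Pref A x) : wd A * (wd B)⁻¹ ∈ xiSet X x ↔ cat B (tail x A.length) ∈ X := by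
  rw [mem_xiSet_iff hX hx]
  constructor
  · rintro ⟨α, β, h, hn, -, hβ⟩
    rw [h, norm_wd_mul_inv_wd_eq_iff] at hn
    obtain ⟨τ, rfl, rfl⟩ := eq_append_of_wd_mul_inv_wd_eq hn h
    rwa [cat_append, ← tail_eq_cat_of_pref hA]
  · intro hB
    obtain ⟨A₀, B₀, τ, rfl, rfl, h₀⟩ := exists_common_suffix A B
    refine ⟨A₀, B₀, wd_append_mul_inv_wd_append _ _ _, ?_, hA.of_append, ?_⟩
    · rw [wd_append_mul_inv_wd_append, norm_wd_mul_inv_wd_eq_iff.2 h₀]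
    · rwa [tail_eq_cat_of_pref hA, ← cat_append]

lemma mul_mem_xiSet_cat (hX : IsSubshift X) {α δ : List Λ} {z : ℕ → Λ} (hα : cat α z ∈ X)
    (hδ : cat δ z ∈ X) {h : FreeGroup Λ} (hh : h ∈ xiSet X (cat δ z)) :
    wd α * (wd δ)⁻¹ * h ∈ xiSet X (cat α z) := by
  obtain ⟨α', β', rfl, -, hpref, hβ'⟩ := (mem_xiSet_iff hX hδ).1 hh
  rcases hpref.exists_append_of_cat with ⟨δ', rfl⟩ | ⟨α'', rfl, hα''⟩
  · have e : wd α * (wd (α' ++ δ'))⁻¹ * (wd α' * (wd β')⁻¹) = wd α * (wd (β' ++ δ'))⁻¹ := by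
      simp only [wd_append, mul_inv_rev]
      group
    rw [cat_append, tail_cat] at hβ'
    rwa [e, mul_inv_mem_xiSet_iff hX hα (pref_cat α z), tail_cat, cat_append]
  · have e : wd α * (wd δ)⁻¹ * (wd (δ ++ α'') * (wd β')⁻¹) = wd (α ++ α'') * (wd β')⁻¹ := by
      simp only [wd_append]
      group
    rw [List.length_append, ← tail_tail, tail_cat] at hβ'
    rwa [e, mul_inv_mem_xiSet_iff hX hα (pref_cat_append hα''), List.length_append, ← tail_tail,
      tail_cat]

lemma translate_xiB_cat (hX : IsSubshift X) {α δ : List Λ} {z : ℕ → Λ} (hα : cat α z ∈ X)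
    (hδ : cat δ z ∈ X) :
    translate (wd δ * (wd α)⁻¹) (xiB X (cat α z)) = xiB X (cat δ z) := by
  funext h
  have hinv : (wd δ * (wd α)⁻¹)⁻¹ * h = wd α * (wd δ)⁻¹ * h := by group
  rw [translate, hinv, xiB_eq_xiB_iff]
  refine ⟨fun hm => ?_, mul_mem_xiSet_cat hX hα hδ⟩
  have e : wd δ * (wd α)⁻¹ * (wd α * (wd δ)⁻¹ * h) = h := by group
  simpa only [e] using mul_mem_xiSet_cat hX hδ hα hm

lemma mem_xiSet_of_agree (hX : IsSubshift X) {y y' : ℕ → Λ} (hy : y ∈ X) (hy' : y' ∈ X)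
    {N : ℕ} (hagree : y' ∈ PiNat.cylinder y N)
    (hfol : ∀ k ≤ N, ∀ β : List Λ, β.length ≤ N → cat β (tail y k) ∈ X → cat β (tail y' k) ∈ X)
    {g : FreeGroup Λ} (hg : FreeGroup.norm g ≤ N) (h : g ∈ xiSet X y) : g ∈ xiSet X y' := by
  obtain ⟨α, β, rfl, hn, hα, hβ⟩ := (mem_xiSet_iff hX hy).1 h
  refine (mem_xiSet_iff hX hy').2 ⟨α, β, rfl, hn, fun i hi => ?_, hfol _ (by omega) β (by omega) hβ⟩
  rw [hagree i (by omega), hα i hi]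

end Spectrum

section Density

variable [DecidableEq Λ] [TopologicalSpace Λ] {X : Set (ℕ → Λ)}

lemma collReached_of_subset_closure_orbit (hX : IsSubshift X) {x z : ℕ → Λ} (hx : x ∈ X)
    (hdense : Omega X ⊆ closure (Orbit (xiB X x))) (hz : z ∈ X) {B : Finset (List Λ)}
    (hzB : ∀ β ∈ B, cat β z ∈ X) : CollReached X B x := by
  set U := ⋂ β ∈ B, (fun η : FreeGroup Λ → Bool => η (wd β)⁻¹) ⁻¹' {true}
  have hU : IsOpen U :=
    isOpen_biInter_finset fun β _ => (isOpen_discrete _).preimage (continuous_apply _)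
  have hzU : xiB X z ∈ U := Set.mem_iInter₂.2 fun β hβ => by
    rw [Set.mem_preimage, Set.mem_singleton_iff, xiB_eq_true, ← one_mul (wd β)⁻¹, ← wd_nil,
      mul_inv_mem_xiSet_iff hX hz (pref_nil z)]
    simpa using hzB β hβ
  obtain ⟨_, hηU, g, hg, rfl⟩ := mem_closure_iff.1 (hdense (subset_closure ⟨z, hz, rfl⟩)) U hU hzU
  obtain ⟨α, δ, hgαδ, -, hα, -⟩ := (mem_xiSet_iff hX hx).1 (xiB_eq_true.1 hg)
  refine ⟨α, δ, hα, fun β hβ => ?_⟩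
  have e : g⁻¹ * (wd β)⁻¹ = wd α * (wd (β ++ δ))⁻¹ := by
    rw [hgαδ, wd_append]
    group
  rw [← mul_inv_mem_xiSet_iff hX hx hα, ← e, ← xiB_eq_true]
  exact Set.mem_iInter₂.1 hηU β hβ

lemma exists_mem_orbit_eq_of_norm_le [Finite Λ] [DiscreteTopology Λ] (hX : IsSubshift X)
    (hcc : CollCofinal X) {x y : ℕ → Λ} (hx : x ∈ X) (hy : y ∈ X) (N : ℕ) :
    ∃ η ∈ Orbit (xiB X x), ∀ g, FreeGroup.norm g ≤ N → η g = xiB X y g := by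
  obtain ⟨m, hNm, hm⟩ := exists_cylinder_cat_tail_mem hX.2.1 y N
  set B := (List.finite_length_le Λ (N + m)).toFinset.filter fun β => cat β (tail y m) ∈ X
  have hB : ∀ β, β ∈ B ↔ β.length ≤ N + m ∧ cat β (tail y m) ∈ X := fun β => by
    simp [B]
  obtain ⟨α, γ, hα, hreach⟩ := hcc B (fun β hβ => mem_language_of_cat_mem ((hB β).1 hβ).2)
    ⟨tail y m, Set.mem_iInter₂.2 fun β hβ => ⟨hX.tail_mem hy m, ((hB β).1 hβ).2⟩⟩ x hx
  set z := tail x α.length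
  set y' := cat (prefixWord y m ++ γ) z
  have hy' : y' ∈ X := hreach _ ((hB _).2 ⟨by simp, by rwa [cat_prefixWord_tail]⟩)
  have hagree : y' ∈ PiNat.cylinder y m := pref_prefixWord_iff.1 (pref_cat _ _).of_append
  have hfol : ∀ k ≤ N, ∀ β : List Λ, β.length ≤ N → cat β (tail y k) ∈ X →
      cat β (tail y' k) ∈ X := fun k hk β hβ hβX => by
    rw [tail_cat_prefixWord_append _ _ _ (hk.trans hNm), ← cat_append, ← List.append_assoc]
    refine hreach _ ((hB _).2 ⟨by simp; omega, ?_⟩)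
    rwa [cat_append, ← tail_eq_cat_drop_prefixWord y (hk.trans hNm)]
  have hxz : cat α z = x := cat_tail_of_pref hα
  refine ⟨xiB X y', ⟨wd (prefixWord y m ++ γ) * (wd α)⁻¹, ?_, ?_⟩, fun g hg => ?_⟩
  · rw [xiB_eq_true, mul_inv_rev, inv_inv, mul_inv_mem_xiSet_iff hX hx hα]
    exact hy'
  · rw [← translate_xiB_cat hX (hxz ▸ hx) hy', hxz]
  · have hagreeN : y' ∈ PiNat.cylinder y N := PiNat.cylinder_anti y hNm hagree
    exact xiB_eq_xiB_iff.2 ⟨mem_xiSet_of_agree hX hy' hy (fun i hi => (hagreeN i hi).symm)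
      (hm _ hagree) hg, mem_xiSet_of_agree hX hy hy' hagreeN hfol hg⟩

lemma xiB_mem_closure_orbit [Finite Λ] [DiscreteTopology Λ] (hX : IsSubshift X)
    (hcc : CollCofinal X) {x y : ℕ → Λ} (hx : x ∈ X) (hy : y ∈ X) :
    xiB X y ∈ closure (Orbit (xiB X x)) := by
  refine mem_closure_iff.2 fun U hU hyU => ?_
  obtain ⟨N, hN⟩ := exists_norm_le_forall_mem hU hyU
  obtain ⟨η, hη, hηy⟩ := exists_mem_orbit_eq_of_norm_le hX hcc hx hy N
  exact ⟨η, hN η hηy, hη⟩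

end Density

theorem orbit_dense_iff_collCofinal_general {Λ : Type} [Fintype Λ] [DecidableEq Λ]
    [TopologicalSpace Λ] [DiscreteTopology Λ]
    (X : Set (ℕ → Λ)) (hX : IsSubshift X) :
    (∀ x ∈ X, Omega X ⊆ closure (Orbit (xiB X x))) ↔ CollCofinal X := by
  refine ⟨fun hdense B _ hB x hx => ?_, fun hcc x hx => ?_⟩
  · obtain ⟨z, hz⟩ := hB
    have hzB : ∀ β ∈ B, z ∈ follower X β := Set.mem_iInter₂.1 hz
    rcases B.eq_empty_or_nonempty with rfl | ⟨β₀, hβ₀⟩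
    · exact ⟨[], [], pref_nil x, by simp⟩
    exact collReached_of_subset_closure_orbit hX hx (hdense x hx) (hzB β₀ hβ₀).1
      fun β hβ => (hzB β hβ).2
  · exact closure_minimal (Set.image_subset_iff.2 fun y hy => xiB_mem_closure_orbit hX hcc hx hy)
      isClosed_closure

/-- every orbit of a point `ξ_x` is dense in `Ω_X` iff `X` is collectively
cofinal. -/
theorem orbit_dense_iff_collCofinal {Λ : Type} [Fintype Λ] [Nonempty Λ] [DecidableEq Λ]
    [TopologicalSpace Λ] [DiscreteTopology Λ]
    (X : Set (ℕ → Λ)) (hX : IsSubshift X) :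
    (∀ x ∈ X, Omega X ⊆ closure (Orbit (xiB X x))) ↔ CollCofinal X :=
  orbit_dense_iff_collCofinal_general X hX

end SubshiftPaper
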